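/- Let p = m and let d be a squarefree integer that is not a quadratic residue modulo p (in particular p ∤ d). Then d is not a square in ℚ_p and there do not exist x, y ∈ ℚ_p satisfying y² = d·x⁴ − 5(m+16n²)·x² + 4(m+16n²)(m+25n²)/d. -/

import Mathlib

lemma isSquare_zmod_of_close (p : ℕ) [hp : Fact p.Prime] (d : ℤ) (z : ℚ_[p])
    (hdn : ‖(d : ℚ_[p])‖ = 1) (hz : ‖z - (d : ℚ_[p])‖ < 1) (hsq : IsSquare z) :
    IsSquare ((d : ZMod p)) := by
  obtain ⟨s, rfl⟩ := hsq
  have hzn : ‖s * s‖ = 1 := by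
    have hne : ‖s * s - (d : ℚ_[p])‖ ≠ ‖(d : ℚ_[p])‖ := by rw [hdn]; exact ne_of_lt hz
    have := Padic.add_eq_max_of_ne (p := p) hne
    rw [sub_add_cancel, hdn] at this
    rw [this, max_eq_right (le_of_lt hz)]
  have hsn : ‖s‖ = 1 := by
    rw [Padic.padicNormE.mul] at hzn
    rcases mul_self_eq_one_iff.mp hzn with h | h
    · exact h
    · nlinarith [norm_nonneg s]
  set S : ℤ_[p] := ⟨s, le_of_eq hsn⟩ with hS
  have hcast : ((S * S - (d : ℤ_[p]) : ℤ_[p]) : ℚ_[p]) = s * s - (d : ℚ_[p]) := by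
    push_cast [hS]; rfl
  have hmem : (S * S - (d : ℤ_[p])) ∈ IsLocalRing.maximalIdeal ℤ_[p] := by
    rw [IsLocalRing.mem_maximalIdeal, mem_nonunits_iff, PadicInt.isUnit_iff]
    intro h
    rw [show ‖S * S - (d : ℤ_[p])‖ = ‖((S * S - (d : ℤ_[p]) : ℤ_[p]) : ℚ_[p])‖ from rfl,
      hcast] at h
    exact (ne_of_lt hz) h
  have h0 : PadicInt.toZMod (S * S - (d : ℤ_[p])) = 0 := by
    rw [← RingHom.mem_ker, PadicInt.ker_toZMod]; exact hmem
  rw [map_sub, map_mul, map_intCast, sub_eq_zero] at h0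
  exact ⟨PadicInt.toZMod S, h0.symm⟩

lemma norm_int_eq_one (p : ℕ) [Fact p.Prime] (k : ℤ) (h : ¬ (p : ℤ) ∣ k) :
    ‖(k : ℚ_[p])‖ = 1 :=
  le_antisymm (Padic.norm_int_le_one k)
    (not_lt.mp fun hlt => h ((Padic.norm_intCast_lt_one_iff (k := k)).mp hlt))

/-- Let `p = m` and let `d` be a squarefree integer that is not a quadratic residue modulo `p`.
Then `d` is not a square in `ℚ_p` and the equation
`y² = d·x⁴ − 5(m+16n²)·x² + 4(m+16n²)(m+25n²)/d` has no solution over `ℚ_p`. -/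
theorem no_Qp_points_on_C'd_at_m (m n : ℕ) (hm : 0 < m) (hn : 0 < n)
    (hm1 : Nat.Prime m) (hm2 : Nat.Prime (m + 16 * n ^ 2)) (hm3 : Nat.Prime (m + 25 * n ^ 2))
    (hc1 : m % 24 = 11) (hc2 : (m + 16 * n ^ 2) % 24 = 11) (hc3 : (m + 25 * n ^ 2) % 24 = 11)
    [Fact (Nat.Prime m)]
    (d : ℤ) (hd : Squarefree d) (hqr : ¬ IsSquare (d : ZMod m)) :
    ¬ IsSquare (d : ℚ_[m]) ∧
    ¬ ∃ x y : ℚ_[m],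
      y ^ 2 = (d : ℚ_[m]) * x ^ 4
        - 5 * ((m : ℚ_[m]) + 16 * (n : ℚ_[m]) ^ 2) * x ^ 2
        + 4 * ((m : ℚ_[m]) + 16 * (n : ℚ_[m]) ^ 2)
          * ((m : ℚ_[m]) + 25 * (n : ℚ_[m]) ^ 2) / (d : ℚ_[m]) := by
  have hm11 : 11 ≤ m := by omega
  -- m does not divide d
  have hmd : ¬ (m : ℤ) ∣ d := by
    intro h
    apply hqr
    have : (d : ZMod m) = 0 := (ZMod.intCast_zmod_eq_zero_iff_dvd d m).mpr h
    rw [this]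
    exact ⟨0, by ring⟩
  have hdn : ‖(d : ℚ_[m])‖ = 1 := norm_int_eq_one m d hmd
  have hd0 : (d : ℚ_[m]) ≠ 0 := by
    intro h; rw [h, norm_zero] at hdn; norm_num at hdn
  -- m does not divide m + 16 n²
  have hma : ¬ (m : ℤ) ∣ ((m : ℤ) + 16 * (n : ℤ) ^ 2) := by
    intro h
    have h1 : m ∣ m + 16 * n ^ 2 := by exact_mod_cast h
    rcases (Nat.Prime.eq_one_or_self_of_dvd hm2 m h1) with h2 | h2 <;> nlinarith
  have hna : ‖(m : ℚ_[m]) + 16 * (n : ℚ_[m]) ^ 2‖ = 1 := by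
    have : (m : ℚ_[m]) + 16 * (n : ℚ_[m]) ^ 2 = (((m : ℤ) + 16 * (n : ℤ) ^ 2 : ℤ) : ℚ_[m]) := by
      push_cast; ring
    rw [this]
    exact norm_int_eq_one m _ hma
  have hn9 : ‖(9 : ℚ_[m])‖ = 1 := by
    have : (9 : ℚ_[m]) = ((9 : ℤ) : ℚ_[m]) := by norm_cast
    rw [this]
    exact norm_int_eq_one m 9 (fun h => by have := Int.le_of_dvd (by norm_num) h; omega)
  have hn4 : ‖(4 : ℚ_[m])‖ = 1 := by
    have : (4 : ℚ_[m]) = ((4 : ℤ) : ℚ_[m]) := by norm_cast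
    rw [this]
    exact norm_int_eq_one m 4 (fun h => by have := Int.le_of_dvd (by norm_num) h; omega)
  have hP1 : 1 < (m : ℝ) := by exact_mod_cast (by omega : 1 < m)
  have hP0 : (0 : ℝ) < (m : ℝ) := by linarith
  constructor
  · intro h
    exact hqr (isSquare_zmod_of_close m d _ hdn (by simp) h)
  · rintro ⟨x, y, hxy⟩
    set A : ℚ_[m] := (m : ℚ_[m]) + 16 * (n : ℚ_[m]) ^ 2 with hA
    set w : ℚ_[m] := x ^ 2 - 5 * A / (2 * (d : ℚ_[m])) with hw
    set e : ℚ_[m] := 9 * A * (m : ℚ_[m]) / (4 * (d : ℚ_[m])) with he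
    have hiden : y ^ 2 = (d : ℚ_[m]) * w ^ 2 - e := by
      rw [hxy, hw, he, hA]
      field_simp
      ring
    have hen : ‖e‖ = (m : ℝ)⁻¹ := by
      rw [he, norm_div, Padic.padicNormE.mul, Padic.padicNormE.mul, Padic.padicNormE.mul, hn9, hna, hn4, hdn,
        Padic.norm_p]
      ring
    have hmQ0 : (m : ℚ_[m]) ≠ 0 := by
      intro h
      rw [h, mul_zero, zero_div] at he
      rw [he, norm_zero] at hen
      have : (m : ℝ)⁻¹ > 0 := by positivity
      linarith [hen ▸ this]
    rcases le_or_gt 1 ‖w‖ with hwn | hwn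
    · -- ‖w‖ ≥ 1 : then (y/w)² is close to d, so d is a square mod p
      have hw0 : w ≠ 0 := by
        intro h; rw [h, norm_zero] at hwn; linarith
      have hkey : ‖(y / w) ^ 2 - (d : ℚ_[m])‖ < 1 := by
        have hid2 : (y / w) ^ 2 - (d : ℚ_[m]) = -(e / w ^ 2) := by
          field_simp
          linear_combination hiden
        rw [hid2, norm_neg, norm_div, norm_pow, hen]
        have h1 : (1 : ℝ) ≤ ‖w‖ ^ 2 := one_le_pow₀ hwn
        have h2 : (m : ℝ)⁻¹ / ‖w‖ ^ 2 ≤ (m : ℝ)⁻¹ := by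
          apply div_le_self (by positivity) h1
        have h3 : (m : ℝ)⁻¹ < 1 := by
          rw [inv_lt_one_iff₀]; right; exact hP1
        linarith
      exact hqr (isSquare_zmod_of_close m d _ hdn hkey ⟨y / w, by ring⟩)
    · -- ‖w‖ < 1 : then ‖y²‖ = ‖e‖ = m⁻¹, impossible parity
      have hwle : ‖w‖ ≤ (m : ℝ)⁻¹ := by
        rcases eq_or_ne w 0 with h | h
        · rw [h, norm_zero]; positivity
        · rw [Padic.norm_eq_zpow_neg_valuation h] at hwn ⊢
          have hv : -w.valuation < 0 := by
            by_contra hc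
            push_neg at hc
            have := one_le_zpow₀ (le_of_lt hP1) hc
            linarith
          calc (m : ℝ) ^ (-w.valuation) ≤ (m : ℝ) ^ (-1 : ℤ) := by
                apply zpow_le_zpow_right₀ (le_of_lt hP1); omega
            _ = (m : ℝ)⁻¹ := by simp
      have hdw : ‖(d : ℚ_[m]) * w ^ 2‖ < ‖e‖ := by
        rw [Padic.padicNormE.mul, norm_pow, hdn, one_mul, hen]
        have : ‖w‖ ^ 2 ≤ (m : ℝ)⁻¹ ^ 2 := by
          apply pow_le_pow_left₀ (norm_nonneg w) hwle
        have h2 : (m : ℝ)⁻¹ ^ 2 < (m : ℝ)⁻¹ := by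
          rw [sq]
          nlinarith [inv_pos.mpr hP0, mul_inv_cancel₀ (ne_of_gt hP0)]
        linarith
      have hyn : ‖y ^ 2‖ = (m : ℝ)⁻¹ := by
        rw [hiden, sub_eq_add_neg, Padic.add_eq_max_of_ne (by rw [norm_neg]; exact ne_of_lt hdw),
          norm_neg, max_eq_right (le_of_lt hdw), hen]
      have hy0 : y ≠ 0 := by
        intro h
        rw [h] at hyn
        simp at hyn
        have : (m : ℝ)⁻¹ > 0 := by positivity
        rw [← hyn] at this
        linarith
      rw [norm_pow, Padic.norm_eq_zpow_neg_valuation hy0] at hyn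
      have h2 : ((m : ℝ) ^ (-y.valuation)) ^ 2 = (m : ℝ) ^ (-y.valuation + -y.valuation) := by
        rw [zpow_add₀ (ne_of_gt hP0)]; ring
      have h3 : (m : ℝ) ^ (-y.valuation + -y.valuation) = (m : ℝ) ^ (-1 : ℤ) := by
        rw [← h2, hyn]; simp
      have h4 := zpow_right_injective₀ hP0 (ne_of_gt hP1) h3
      omega
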